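/- For ε > 0 and w ∈ ℝ let c(ε, w) = (4πε)^{−1/2} · exp(−(w − ε)²/(4ε)). Then for every z ∈ ℝ and every ε > 0, the function ε ↦ ∫_ℝ c(ε, w) · ln(1 + e^{−w−z}) dw is differentiable, and its derivative equals −∫_ℝ c(ε, w) · (1 + e^{w+z})^{−2} dw. -/

import Mathlib

open Real MeasureTheory Filter

/-- `c(ε, w) = (4πε)^{−1/2} exp(−(w − ε)²/(4ε))`, the density of the Gaussian
distribution with mean `ε` and variance `2ε` (the BAWGN channel `L`-density with
`ε = 2/σ²`). -/
noncomputable def gaussLDensity (ε w : ℝ) : ℝ :=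
  (1 / Real.sqrt (4 * Real.pi * ε)) * Real.exp (-(w - ε) ^ 2 / (4 * ε))

section aux

lemma gauss_pos {e : ℝ} (he : 0 < e) (w : ℝ) : 0 < gaussLDensity e w := by
  unfold gaussLDensity
  have : 0 < Real.sqrt (4 * Real.pi * e) := Real.sqrt_pos.2 (by positivity)
  positivity

lemma gauss_cont (e : ℝ) : Continuous (fun w => gaussLDensity e w) := by
  unfold gaussLDensity
  fun_prop

lemma hasDerivAt_gauss_w {e : ℝ} (he : 0 < e) (w : ℝ) :
    HasDerivAt (fun w => gaussLDensity e w) (gaussLDensity e w * (-(w - e) / (2 * e))) w := by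
  have h1 : HasDerivAt (fun w : ℝ => -(w - e) ^ 2 / (4 * e))
      (-(2 * (w - e)) / (4 * e)) w := by
    have := (((hasDerivAt_id w).sub_const e).pow 2).neg.div_const (4 * e)
    simpa using this
  have h2 := ((h1.exp).const_mul (1 / Real.sqrt (4 * Real.pi * e)))
  refine h2.congr_deriv (Eq.symm ?_)
  unfold gaussLDensity
  field_simp
  ring

lemma hasDerivAt_gauss_e (w : ℝ) {e : ℝ} (he : 0 < e) :
    HasDerivAt (fun e => gaussLDensity e w)
      (gaussLDensity e w * (-(1 / (2 * e)) + (w - e) / (2 * e) + (w - e) ^ 2 / (4 * e ^ 2))) e := by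
  have hs : 0 < Real.sqrt (4 * Real.pi * e) := Real.sqrt_pos.2 (by positivity)
  have hsd : HasDerivAt (fun e : ℝ => Real.sqrt (4 * Real.pi * e))
      (4 * Real.pi / (2 * Real.sqrt (4 * Real.pi * e))) e := by
    have h0 : HasDerivAt (fun e : ℝ => 4 * Real.pi * e) (4 * Real.pi) e := by
      simpa using (hasDerivAt_id e).const_mul (4 * Real.pi)
    have := (Real.hasDerivAt_sqrt (by positivity : (4 * Real.pi * e) ≠ 0)).comp e h0
    refine this.congr_deriv (Eq.symm ?_)
    ring
  have hinv : HasDerivAt (fun e : ℝ => 1 / Real.sqrt (4 * Real.pi * e))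
      (-(4 * Real.pi / (2 * Real.sqrt (4 * Real.pi * e))) / (Real.sqrt (4 * Real.pi * e)) ^ 2) e := by
    have := hsd.inv hs.ne'
    simp only [one_div]
    exact this
  have hexp : HasDerivAt (fun e : ℝ => -(w - e) ^ 2 / (4 * e))
      ((2 * (w - e) * (4 * e) - -(w - e) ^ 2 * 4) / (4 * e) ^ 2) e := by
    have hn : HasDerivAt (fun e : ℝ => -(w - e) ^ 2) (2 * (w - e)) e := by
      have := (((hasDerivAt_id e).const_sub w).pow 2).neg
      refine this.congr_deriv ?_
      simp
    have hd : HasDerivAt (fun e : ℝ => 4 * e) 4 e := by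
      simpa using (hasDerivAt_id e).const_mul 4
    exact hn.div hd (by positivity)
  have key := hinv.mul hexp.exp
  refine key.congr_deriv (Eq.symm ?_)
  unfold gaussLDensity
  set s := Real.sqrt (4 * Real.pi * e) with hsdef
  have hss : s * s = 4 * Real.pi * e := Real.mul_self_sqrt (by positivity)
  have hpi : 4 * Real.pi = s * s / e := by field_simp [hss]; rw [sq, hss]
  rw [hpi]
  set E := Real.exp (-(w - e) ^ 2 / (4 * e))
  field_simp
  ring

lemma one_add_exp_pos (u : ℝ) : 0 < 1 + Real.exp u := by positivity

lemma hasDerivAt_g (z w : ℝ) :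
    HasDerivAt (fun w => Real.log (1 + Real.exp (-w - z)))
      (-(1 + Real.exp (w + z))⁻¹) w := by
  have h1 : HasDerivAt (fun w : ℝ => -w - z) (-1) w := by
    simpa using ((hasDerivAt_id w).neg.sub_const z)
  have h3 : HasDerivAt (fun w : ℝ => 1 + Real.exp (-w - z))
      (-1 * Real.exp (-w - z)) w := by
    simpa using h1.exp.const_add 1
  have h4 := h3.log (one_add_exp_pos _).ne'
  convert h4 using 1
  have hE : Real.exp (-w - z) * Real.exp (w + z) = 1 := by
    rw [← Real.exp_add, show -w - z + (w + z) = 0 by ring, Real.exp_zero]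
  have p1 := (one_add_exp_pos (w + z)).ne'
  have p2 := (one_add_exp_pos (-w - z)).ne'
  field_simp
  linear_combination hE

lemma hasDerivAt_g1 (z w : ℝ) :
    HasDerivAt (fun w => -(1 + Real.exp (w + z))⁻¹)
      (Real.exp (w + z) / (1 + Real.exp (w + z)) ^ 2) w := by
  have h1 : HasDerivAt (fun w : ℝ => w + z) 1 w := (hasDerivAt_id w).add_const z
  have h3 : HasDerivAt (fun w : ℝ => 1 + Real.exp (w + z)) (Real.exp (w + z)) w := by
    simpa using h1.exp.const_add 1
  have h4 := (h3.inv (one_add_exp_pos _).ne').neg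
  refine h4.congr_deriv (Eq.symm ?_)
  field_simp

lemma g_nonneg (z w : ℝ) : 0 ≤ Real.log (1 + Real.exp (-w - z)) :=
  Real.log_nonneg (by nlinarith [Real.exp_pos (-w - z)])

lemma g_le (z w : ℝ) : Real.log (1 + Real.exp (-w - z)) ≤ Real.log 2 + |z| + |w| := by
  have h1 : 1 + Real.exp (-w - z) ≤ 2 * Real.exp (|z| + |w|) := by
    have e1 : Real.exp (-w - z) ≤ Real.exp (|z| + |w|) := by
      apply Real.exp_le_exp.2
      have h2 : -w - z ≤ |w| + |z| := by
        calc -w - z ≤ |(-w - z)| := le_abs_self _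
        _ ≤ |(-w)| + |(-z)| := by rw [show -w - z = -w + -z by ring]; exact abs_add_le _ _
        _ = |w| + |z| := by rw [abs_neg, abs_neg]
      linarith
    have e2 : (1:ℝ) ≤ Real.exp (|z| + |w|) := Real.one_le_exp (by positivity)
    linarith
  calc Real.log (1 + Real.exp (-w - z)) ≤ Real.log (2 * Real.exp (|z| + |w|)) := by
        apply Real.log_le_log (by positivity) h1
  _ = Real.log 2 + (|z| + |w|) := by rw [Real.log_mul (by norm_num) (Real.exp_pos _).ne', Real.log_exp]
  _ = Real.log 2 + |z| + |w| := by ring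

lemma g_cont (z : ℝ) : Continuous (fun w => Real.log (1 + Real.exp (-w - z))) := by
  have h : Continuous (fun w : ℝ => 1 + Real.exp (-w - z)) := by fun_prop
  exact h.log fun w => (one_add_exp_pos _).ne'

lemma integrable_abs_pow_gauss {a : ℝ} (ha : 0 < a) (n : ℕ) :
    Integrable (fun w : ℝ => |w| ^ n * Real.exp (-a * w ^ 2)) := by
  have h := (integrable_rpow_mul_exp_neg_mul_sq ha (s := (n:ℝ))
    (by exact lt_of_lt_of_le (by norm_num) (Nat.cast_nonneg n))).abs
  apply h.congr
  filter_upwards with w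
  rw [abs_mul, Real.rpow_natCast, abs_pow, abs_of_pos (Real.exp_pos _)]

lemma integrable_one_add_abs_pow_gauss {a : ℝ} (ha : 0 < a) (n : ℕ) :
    Integrable (fun w : ℝ => (1 + |w|) ^ n * Real.exp (-a * w ^ 2)) := by
  have hmaj : Integrable (fun w : ℝ => (2:ℝ) ^ n * (Real.exp (-a * w ^ 2))
      + 2 ^ n * (|w| ^ n * Real.exp (-a * w ^ 2))) :=
    (((integrable_exp_neg_mul_sq ha).const_mul _).add
      ((integrable_abs_pow_gauss ha n).const_mul _))
  apply hmaj.mono'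
  · apply Continuous.aestronglyMeasurable
    continuity
  · filter_upwards with w
    rw [Real.norm_eq_abs, abs_of_nonneg (by positivity)]
    have h1 : (1 + |w|) ^ n ≤ 2 ^ n * (1 + |w| ^ n) := by
      rcases le_total (|w|) 1 with h | h
      · calc (1 + |w|) ^ n ≤ 2 ^ n := by gcongr <;> linarith [abs_nonneg w]
        _ ≤ 2 ^ n * (1 + |w| ^ n) := by nlinarith [pow_nonneg (abs_nonneg w) n, pow_pos (show (0:ℝ)<2 by norm_num) n]
      · calc (1 + |w|) ^ n ≤ (2 * |w|) ^ n := by gcongr; linarith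
        _ = 2 ^ n * |w| ^ n := mul_pow 2 _ n
        _ ≤ 2 ^ n * (1 + |w| ^ n) := by nlinarith [pow_pos (show (0:ℝ)<2 by norm_num) n]
    calc (1 + |w|) ^ n * Real.exp (-a * w ^ 2)
        ≤ (2 ^ n * (1 + |w| ^ n)) * Real.exp (-a * w ^ 2) := by
          gcongr
    _ = 2 ^ n * Real.exp (-a * w ^ 2) + 2 ^ n * (|w| ^ n * Real.exp (-a * w ^ 2)) := by ring

lemma tendsto_one_add_abs_pow_gauss_atTop {a : ℝ} (ha : 0 < a) (n : ℕ) :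
    Tendsto (fun w : ℝ => (1 + |w|) ^ n * Real.exp (-a * w ^ 2)) atTop (nhds 0) := by
  have hb : Tendsto (fun w : ℝ => (2:ℝ) ^ n * (w ^ (n:ℝ) * Real.exp (-a * w))) atTop (nhds 0) := by
    have := tendsto_rpow_mul_exp_neg_mul_atTop_nhds_zero (n : ℝ) a ha
    simpa using this.const_mul ((2:ℝ) ^ n)
  apply squeeze_zero' ?_ ?_ hb
  · filter_upwards with w; positivity
  · filter_upwards [eventually_ge_atTop (max 1 (1/a))] with w hw
    have hw1 : (1:ℝ) ≤ w := le_trans (le_max_left _ _) hw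
    have hwa : 1/a ≤ w := le_trans (le_max_right _ _) hw
    have habs : |w| = w := abs_of_pos (by linarith)
    have h1 : (1 + |w|) ^ n ≤ (2 * w) ^ n := by rw [habs]; gcongr; linarith
    have h2 : Real.exp (-a * w ^ 2) ≤ Real.exp (-a * w) := by
      apply Real.exp_le_exp.2
      nlinarith [mul_le_mul_of_nonneg_left (show w ≤ w ^ 2 by nlinarith) ha.le]
    calc (1 + |w|) ^ n * Real.exp (-a * w ^ 2) ≤ (2 * w) ^ n * Real.exp (-a * w) := by
          apply mul_le_mul h1 h2 (Real.exp_pos _).le (by positivity)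
    _ = 2 ^ n * (w ^ (n:ℝ) * Real.exp (-a * w)) := by
        rw [mul_pow, Real.rpow_natCast]
        ring

lemma tendsto_one_add_abs_pow_gauss_atBot {a : ℝ} (ha : 0 < a) (n : ℕ) :
    Tendsto (fun w : ℝ => (1 + |w|) ^ n * Real.exp (-a * w ^ 2)) atBot (nhds 0) := by
  have h := (tendsto_one_add_abs_pow_gauss_atTop ha n).comp tendsto_neg_atBot_atTop
  apply h.congr
  intro w
  simp [abs_neg]

end aux

set_option maxHeartbeats 2000000 in
/-- For every `z ∈ ℝ` and `ε > 0`, the map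
`ε ↦ ∫ c(ε, w) ln(1 + e^{−w−z}) dw` is differentiable with derivative
`−∫ c(ε, w) (1 + e^{w+z})^{−2} dw`. -/
theorem gaussLDensity_entropy_deriv (z : ℝ) (ε : ℝ) (hε : 0 < ε) :
    HasDerivAt (fun e => ∫ w : ℝ, gaussLDensity e w * Real.log (1 + Real.exp (-w - z)))
      (-∫ w : ℝ, gaussLDensity ε w / (1 + Real.exp (w + z)) ^ 2) ε := by
  have hε2 : 0 < ε/2 := by linarith
  set a : ℝ := 1/(12*ε) with ha_def
  have ha : 0 < a := by positivity
  set D : ℝ := (1/Real.sqrt (2*Real.pi*ε)) * Real.exp (3*ε/8) with hD_def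
  have hD : 0 < D := by
    have : 0 < Real.sqrt (2*Real.pi*ε) := Real.sqrt_pos.2 (by positivity)
    rw [hD_def]; positivity
  set A : ℝ := 1/ε + (1 + 3*ε/2)/ε + (1 + 3*ε/2)^2/ε^2 with hA_def
  have hA : 0 < A := by rw [hA_def]; positivity
  set B : ℝ := Real.log 2 + |z| + 1 with hB_def
  have hB : 0 < B := by
    have := Real.log_pos (by norm_num : (1:ℝ) < 2)
    have := abs_nonneg z
    rw [hB_def]; linarith
  -- gauss bound
  have hgauss_le : ∀ e, ε/2 < e → e < 3*ε/2 → ∀ w,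
      gaussLDensity e w ≤ D * Real.exp (-a * w^2) := by
    intro e h1 h2 w
    have he : 0 < e := lt_trans hε2 h1
    have hs1 : Real.sqrt (2*Real.pi*ε) ≤ Real.sqrt (4*Real.pi*e) :=
      Real.sqrt_le_sqrt (by nlinarith [Real.pi_pos])
    have hs0 : 0 < Real.sqrt (2*Real.pi*ε) := Real.sqrt_pos.2 (by positivity)
    have hfrac : 1/Real.sqrt (4*Real.pi*e) ≤ 1/Real.sqrt (2*Real.pi*ε) :=
      one_div_le_one_div_of_le hs0 hs1
    have hexp : Real.exp (-(w-e)^2/(4*e)) ≤ Real.exp (3*ε/8) * Real.exp (-a*w^2) := by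
      rw [← Real.exp_add]
      apply Real.exp_le_exp.2
      have h3 : (0:ℝ) ≤ 3*ε - 2*e := by linarith
      have key : 0 ≤ 6*ε*(w-e)^2 + 9*ε^2*e - 2*e*w^2 := by
        nlinarith [mul_nonneg h3 (sq_nonneg w), mul_nonneg hε.le (sq_nonneg (w-2*e)),
          mul_nonneg (mul_nonneg hε.le he.le) h3]
      have heq : 3*ε/8 + (-a*w^2) - (-(w-e)^2/(4*e))
          = (6*ε*(w-e)^2 + 9*ε^2*e - 2*e*w^2)/(24*ε*e) := by
        rw [ha_def]; field_simp; ring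
      have hnn : 0 ≤ 3*ε/8 + (-a*w^2) - (-(w-e)^2/(4*e)) := by
        rw [heq]; exact div_nonneg key (by positivity)
      linarith
    unfold gaussLDensity
    calc (1/Real.sqrt (4*Real.pi*e)) * Real.exp (-(w-e)^2/(4*e))
        ≤ (1/Real.sqrt (2*Real.pi*ε)) * (Real.exp (3*ε/8) * Real.exp (-a*w^2)) := by
          apply mul_le_mul hfrac hexp (Real.exp_pos _).le (by positivity)
      _ = D * Real.exp (-a*w^2) := by rw [hD_def]; ring
  -- q bound
  have hq_le : ∀ e, ε/2 < e → e < 3*ε/2 → ∀ w,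
      |(-(1/(2*e)) + (w-e)/(2*e) + (w-e)^2/(4*e^2))| ≤ A * (1+|w|)^2 := by
    intro e h1 h2 w
    have he : 0 < e := lt_trans hε2 h1
    have hw0 := abs_nonneg w
    have hone : (1:ℝ) ≤ (1+|w|)^2 := by nlinarith
    have honele : (1+|w|) ≤ (1+|w|)^2 := by nlinarith
    have habs : |w - e| ≤ (1 + 3*ε/2) * (1 + |w|) := by
      have h3 : |w - e| ≤ |w| + |e| := by
        calc |w - e| = |w + -e| := by rw [sub_eq_add_neg]
        _ ≤ |w| + |(-e)| := abs_add_le _ _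
        _ = |w| + |e| := by rw [abs_neg]
      rw [abs_of_pos he] at h3
      nlinarith
    have t1 : |(-(1/(2*e)))| ≤ (1/ε) * (1+|w|)^2 := by
      rw [abs_neg, abs_of_pos (by positivity)]
      calc 1/(2*e) ≤ 1/ε := one_div_le_one_div_of_le hε (by linarith)
      _ = (1/ε) * 1 := by ring
      _ ≤ (1/ε) * (1+|w|)^2 := by
          apply mul_le_mul_of_nonneg_left hone (by positivity)
    have t2 : |(w-e)/(2*e)| ≤ ((1 + 3*ε/2)/ε) * (1+|w|)^2 := by
      rw [abs_div, abs_of_pos (by positivity : (0:ℝ) < 2*e)]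
      calc |w-e|/(2*e) ≤ ((1 + 3*ε/2) * (1 + |w|))/ε := by
            apply div_le_div₀ (by positivity) habs hε (by linarith)
      _ = ((1 + 3*ε/2)/ε) * (1+|w|) := by ring
      _ ≤ ((1 + 3*ε/2)/ε) * (1+|w|)^2 := by
          apply mul_le_mul_of_nonneg_left honele (by positivity)
    have t3 : |(w-e)^2/(4*e^2)| ≤ ((1 + 3*ε/2)^2/ε^2) * (1+|w|)^2 := by
      rw [abs_div, abs_of_nonneg (sq_nonneg (w-e)), abs_of_pos (by positivity : (0:ℝ) < 4*e^2)]
      have hsq : (w - e)^2 ≤ ((1 + 3*ε/2) * (1 + |w|))^2 := by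
        rw [← sq_abs (w - e)]
        exact pow_le_pow_left₀ (abs_nonneg _) habs 2
      calc (w-e)^2/(4*e^2) ≤ (((1 + 3*ε/2) * (1 + |w|))^2)/ε^2 := by
            apply div_le_div₀ (by positivity) hsq (by positivity) (by nlinarith)
      _ = ((1 + 3*ε/2)^2/ε^2) * (1+|w|)^2 := by ring
    have tri : |(-(1/(2*e)) + (w-e)/(2*e) + (w-e)^2/(4*e^2))|
        ≤ |(-(1/(2*e)))| + |(w-e)/(2*e)| + |(w-e)^2/(4*e^2)| := abs_add_three _ _ _
    have hAe : A * (1+|w|)^2 = (1/ε) * (1+|w|)^2 + ((1 + 3*ε/2)/ε) * (1+|w|)^2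
        + ((1 + 3*ε/2)^2/ε^2) * (1+|w|)^2 := by rw [hA_def]; ring
    linarith
  -- g bound
  have hg_le : ∀ w, Real.log (1 + Real.exp (-w - z)) ≤ B * (1 + |w|) := by
    intro w
    have h1 := g_le z w
    have h2 := Real.log_pos (by norm_num : (1:ℝ) < 2)
    have hz := abs_nonneg z
    have hw := abs_nonneg w
    have hp : 0 ≤ (Real.log 2 + |z|) * |w| := mul_nonneg (by linarith) hw
    have hBe : B * (1 + |w|) = Real.log 2 + |z| + 1 + |w| + (Real.log 2 + |z|) * |w| := by
      rw [hB_def]; ring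
    linarith
  -- ball facts
  have hball : ∀ e ∈ Metric.ball ε (ε/2), ε/2 < e ∧ e < 3*ε/2 := by
    intro e he
    rw [Metric.mem_ball, Real.dist_eq, abs_lt] at he
    constructor <;> linarith [he.1, he.2]
  have h13 : ∀ w : ℝ, (1+|w|) ≤ (1+|w|)^3 := fun w => by
    calc (1+|w|) = (1+|w|)^1 := (pow_one _).symm
    _ ≤ (1+|w|)^3 := pow_le_pow_right₀ (by linarith [abs_nonneg w]) (by norm_num)
  have h03 : ∀ w : ℝ, (1:ℝ) ≤ (1+|w|)^3 := fun w => one_le_pow₀ (by linarith [abs_nonneg w])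
  have h23 : ∀ w : ℝ, (1+|w|)^2 ≤ (1+|w|)^3 :=
    fun w => pow_le_pow_right₀ (by linarith [abs_nonneg w]) (by norm_num)
  -- integrable bound
  have bound_int : Integrable (fun w : ℝ => (D*(A*B)) * ((1+|w|)^3 * Real.exp (-a*w^2))) :=
    (integrable_one_add_abs_pow_gauss ha 3).const_mul _
  -- measurability
  have hF_meas : ∀ᶠ e in nhds ε, AEStronglyMeasurable
      (fun w : ℝ => gaussLDensity e w * Real.log (1 + Real.exp (-w - z))) volume :=
    Filter.Eventually.of_forall fun e => ((gauss_cont e).mul (g_cont z)).aestronglyMeasurable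
  have hF'_cont : Continuous (fun w : ℝ => gaussLDensity ε w *
      (-(1/(2*ε)) + (w-ε)/(2*ε) + (w-ε)^2/(4*ε^2)) * Real.log (1 + Real.exp (-w - z))) := by
    apply Continuous.mul (Continuous.mul (gauss_cont ε) (by fun_prop)) (g_cont z)
  -- integrability of F ε
  have hF_int : Integrable (fun w : ℝ => gaussLDensity ε w * Real.log (1 + Real.exp (-w - z))) := by
    apply ((integrable_one_add_abs_pow_gauss ha 3).const_mul (D*B)).mono'
      (((gauss_cont ε).mul (g_cont z)).aestronglyMeasurable)
    filter_upwards with w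
    have hcb := hgauss_le ε (by linarith) (by linarith) w
    have hgb := hg_le w
    rw [Pi.mul_apply, Real.norm_eq_abs, abs_of_nonneg (mul_nonneg (gauss_pos hε w).le (g_nonneg z w))]
    calc gaussLDensity ε w * Real.log (1 + Real.exp (-w-z))
        ≤ (D * Real.exp (-a*w^2)) * (B*(1+|w|)) :=
          mul_le_mul hcb hgb (g_nonneg z w) (by positivity)
      _ ≤ (D * Real.exp (-a*w^2)) * (B*(1+|w|)^3) := by
          apply mul_le_mul_of_nonneg_left _ (by positivity)
          exact mul_le_mul_of_nonneg_left (h13 w) hB.le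
      _ = (D*B) * ((1+|w|)^3 * Real.exp (-a*w^2)) := by ring
  -- uniform bound on the derivative
  have h_bound : ∀ w : ℝ, ∀ e ∈ Metric.ball ε (ε/2),
      ‖gaussLDensity e w * (-(1/(2*e)) + (w-e)/(2*e) + (w-e)^2/(4*e^2)) *
        Real.log (1 + Real.exp (-w-z))‖ ≤ (D*(A*B)) * ((1+|w|)^3 * Real.exp (-a*w^2)) := by
    intro w e he
    obtain ⟨h1, h2⟩ := hball e he
    have he0 : 0 < e := lt_trans hε2 h1
    have hcb := hgauss_le e h1 h2 w
    have hqb := hq_le e h1 h2 w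
    have hgb := hg_le w
    rw [Real.norm_eq_abs, abs_mul, abs_mul, abs_of_pos (gauss_pos he0 w),
      abs_of_nonneg (g_nonneg z w)]
    calc gaussLDensity e w * |(-(1/(2*e)) + (w-e)/(2*e) + (w-e)^2/(4*e^2))| *
          Real.log (1 + Real.exp (-w-z))
        ≤ (D * Real.exp (-a*w^2)) * (A*(1+|w|)^2) * (B*(1+|w|)) := by
          apply mul_le_mul (mul_le_mul hcb hqb (abs_nonneg _) (by positivity)) hgb
            (g_nonneg z w) (by positivity)
      _ = (D*(A*B)) * (((1+|w|)^2*(1+|w|)) * Real.exp (-a*w^2)) := by ring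
      _ = (D*(A*B)) * ((1+|w|)^3 * Real.exp (-a*w^2)) := by ring
  have h_diff : ∀ w : ℝ, ∀ e ∈ Metric.ball ε (ε/2),
      HasDerivAt (fun e => gaussLDensity e w * Real.log (1 + Real.exp (-w-z)))
        (gaussLDensity e w * (-(1/(2*e)) + (w-e)/(2*e) + (w-e)^2/(4*e^2)) *
          Real.log (1 + Real.exp (-w-z))) e := by
    intro w e he
    have he0 : 0 < e := lt_trans hε2 (hball e he).1
    exact (hasDerivAt_gauss_e w he0).mul_const _
  obtain ⟨hF'int, hderiv⟩ := hasDerivAt_integral_of_dominated_loc_of_deriv_le (Metric.ball_mem_nhds ε hε2) hF_meas hF_int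
    hF'_cont.aestronglyMeasurable (ae_of_all _ h_bound) bound_int (ae_of_all _ h_diff)
  -- integrability of the gaussian itself
  have hc_int : Integrable (fun w : ℝ => gaussLDensity ε w) := by
    apply ((integrable_exp_neg_mul_sq ha).const_mul D).mono' (gauss_cont ε).aestronglyMeasurable
    filter_upwards with w
    rw [Real.norm_eq_abs, abs_of_pos (gauss_pos hε w)]
    exact hgauss_le ε (by linarith) (by linarith) w
  -- integrability of c * (g1 + g2)
  have hφ_cont : Continuous (fun w : ℝ =>
      -(1 + Real.exp (w + z))⁻¹ + Real.exp (w + z)/(1 + Real.exp (w + z))^2) := by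
    have c1 : Continuous (fun w : ℝ => (1 + Real.exp (w + z))) := by fun_prop
    have c2 : Continuous (fun w : ℝ => Real.exp (w + z)) := by fun_prop
    exact ((c1.inv₀ fun w => (one_add_exp_pos _).ne').neg).add
      (c2.div (c1.pow 2) fun w => pow_ne_zero 2 (one_add_exp_pos _).ne')
  have hφ_int : Integrable (fun w : ℝ => gaussLDensity ε w *
      (-(1 + Real.exp (w + z))⁻¹ + Real.exp (w + z)/(1 + Real.exp (w + z))^2)) := by
    apply (hc_int.const_mul 2).mono' ((gauss_cont ε).mul hφ_cont).aestronglyMeasurable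
    filter_upwards with w
    have h1p := one_add_exp_pos (w + z)
    have hE := Real.exp_pos (w + z)
    have hg1b : |(-(1 + Real.exp (w + z))⁻¹)| ≤ 1 := by
      rw [abs_neg, abs_of_pos (inv_pos.2 h1p)]
      exact inv_le_one_of_one_le₀ (by linarith)
    have hg2b : |Real.exp (w + z)/(1 + Real.exp (w + z))^2| ≤ 1 := by
      rw [abs_of_pos (by positivity), div_le_one (by positivity)]
      nlinarith
    have htri := abs_add_le (-(1 + Real.exp (w + z))⁻¹)
      (Real.exp (w + z)/(1 + Real.exp (w + z))^2)
    rw [Pi.mul_apply, Real.norm_eq_abs, abs_mul, abs_of_pos (gauss_pos hε w)]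
    calc gaussLDensity ε w * |(-(1 + Real.exp (w + z))⁻¹ +
          Real.exp (w + z)/(1 + Real.exp (w + z))^2)|
        ≤ gaussLDensity ε w * 2 := by
          apply mul_le_mul_of_nonneg_left (by linarith) (gauss_pos hε w).le
      _ = 2 * gaussLDensity ε w := by ring
  -- the boundary function H and its derivative
  have hHderiv : ∀ w : ℝ, HasDerivAt (fun w =>
      -(gaussLDensity ε w * Real.log (1 + Real.exp (-w - z)))
      + (gaussLDensity ε w * (-(w - ε)/(2*ε))) * Real.log (1 + Real.exp (-w - z))
      - gaussLDensity ε w * (-(1 + Real.exp (w + z))⁻¹))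
      (gaussLDensity ε w * (-(1/(2*ε)) + (w-ε)/(2*ε) + (w-ε)^2/(4*ε^2)) *
        Real.log (1 + Real.exp (-w - z))
      - gaussLDensity ε w * (-(1 + Real.exp (w + z))⁻¹ +
        Real.exp (w + z)/(1 + Real.exp (w + z))^2)) w := by
    intro w
    have hc := hasDerivAt_gauss_w hε w
    have hlin : HasDerivAt (fun w : ℝ => -(w - ε)/(2*ε)) (-1/(2*ε)) w := by
      have := (((hasDerivAt_id w).sub_const ε).neg).div_const (2*ε)
      exact this
    have hcp := hc.mul hlin
    have hgd := hasDerivAt_g z w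
    have hg1d := hasDerivAt_g1 z w
    have htot := (((hc.mul hgd).neg).add (hcp.mul hgd)).sub (hc.mul hg1d)
    refine htot.congr_deriv (Eq.symm ?_)
    have hEne := (one_add_exp_pos (w + z)).ne'
    simp only [Pi.mul_apply]
    field_simp
    ring
  -- bound on H
  have hHbound : ∀ w : ℝ, ‖-(gaussLDensity ε w * Real.log (1 + Real.exp (-w - z)))
      + (gaussLDensity ε w * (-(w - ε)/(2*ε))) * Real.log (1 + Real.exp (-w - z))
      - gaussLDensity ε w * (-(1 + Real.exp (w + z))⁻¹)‖
      ≤ (D*(B + ((1+3*ε/2)/ε)*B + 1)) * ((1+|w|)^3 * Real.exp (-a*w^2)) := by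
    intro w
    have hcb := hgauss_le ε (by linarith) (by linarith) w
    have hgb := hg_le w
    have hg0 := g_nonneg z w
    have hc0 := (gauss_pos hε w).le
    have hw0 := abs_nonneg w
    have hex := (Real.exp_pos (-a*w^2)).le
    have habs : |w - ε| ≤ (1 + 3*ε/2) * (1 + |w|) := by
      have h3 : |w - ε| ≤ |w| + |ε| := by
        calc |w - ε| = |w + -ε| := by rw [sub_eq_add_neg]
        _ ≤ |w| + |(-ε)| := abs_add_le _ _
        _ = |w| + |ε| := by rw [abs_neg]
      rw [abs_of_pos hε] at h3
      nlinarith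
    have hlinb : |(-(w - ε)/(2*ε))| ≤ ((1+3*ε/2)/ε) * (1+|w|) := by
      rw [abs_div, abs_neg, abs_of_pos (show (0:ℝ) < 2*ε by linarith)]
      calc |w-ε|/(2*ε) ≤ ((1 + 3*ε/2) * (1 + |w|))/(2*ε) := by
            apply div_le_div₀ (by positivity) habs (by linarith) le_rfl
      _ ≤ ((1 + 3*ε/2) * (1 + |w|))/ε := by
            apply div_le_div₀ (by positivity) le_rfl hε (by linarith)
      _ = ((1+3*ε/2)/ε) * (1+|w|) := by ring
    have hg1b : |(-(1 + Real.exp (w + z))⁻¹)| ≤ 1 := by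
      rw [abs_neg, abs_of_pos (inv_pos.2 (one_add_exp_pos (w+z)))]
      exact inv_le_one_of_one_le₀ (by linarith [Real.exp_pos (w+z)])
    have hrw : -(gaussLDensity ε w * Real.log (1 + Real.exp (-w - z)))
        + (gaussLDensity ε w * (-(w - ε)/(2*ε))) * Real.log (1 + Real.exp (-w - z))
        - gaussLDensity ε w * (-(1 + Real.exp (w + z))⁻¹)
        = -(gaussLDensity ε w * Real.log (1 + Real.exp (-w - z)))
        + (gaussLDensity ε w * (-(w - ε)/(2*ε))) * Real.log (1 + Real.exp (-w - z))
        + -(gaussLDensity ε w * (-(1 + Real.exp (w + z))⁻¹)) := by ring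
    rw [Real.norm_eq_abs, hrw]
    have tri := abs_add_three (-(gaussLDensity ε w * Real.log (1 + Real.exp (-w - z))))
      ((gaussLDensity ε w * (-(w - ε)/(2*ε))) * Real.log (1 + Real.exp (-w - z)))
      (-(gaussLDensity ε w * (-(1 + Real.exp (w + z))⁻¹)))
    have b1 : |(-(gaussLDensity ε w * Real.log (1 + Real.exp (-w - z))))|
        ≤ D * Real.exp (-a*w^2) * (B*(1+|w|)^3) := by
      rw [abs_neg, abs_of_nonneg (mul_nonneg hc0 hg0)]
      calc gaussLDensity ε w * Real.log (1 + Real.exp (-w - z))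
          ≤ (D * Real.exp (-a*w^2)) * (B*(1+|w|)) :=
            mul_le_mul hcb hgb hg0 (by positivity)
        _ ≤ D * Real.exp (-a*w^2) * (B*(1+|w|)^3) := by
            apply mul_le_mul_of_nonneg_left _ (by positivity)
            exact mul_le_mul_of_nonneg_left (h13 w) hB.le
    have b2 : |(gaussLDensity ε w * (-(w - ε)/(2*ε))) * Real.log (1 + Real.exp (-w - z))|
        ≤ D * Real.exp (-a*w^2) * (((1+3*ε/2)/ε)*B*(1+|w|)^3) := by
      rw [abs_mul, abs_mul, abs_of_pos (gauss_pos hε w), abs_of_nonneg hg0]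
      calc gaussLDensity ε w * |(-(w - ε)/(2*ε))| * Real.log (1 + Real.exp (-w - z))
          ≤ (D * Real.exp (-a*w^2)) * (((1+3*ε/2)/ε) * (1+|w|)) * (B*(1+|w|)) := by
            apply mul_le_mul (mul_le_mul hcb hlinb (abs_nonneg _) (by positivity)) hgb hg0
              (by positivity)
        _ = (D * Real.exp (-a*w^2)) * (((1+3*ε/2)/ε)*B*(1+|w|)^2) := by ring
        _ ≤ D * Real.exp (-a*w^2) * (((1+3*ε/2)/ε)*B*(1+|w|)^3) := by
            apply mul_le_mul_of_nonneg_left _ (by positivity)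
            apply mul_le_mul_of_nonneg_left (h23 w) (by positivity)
    have b3 : |(-(gaussLDensity ε w * (-(1 + Real.exp (w + z))⁻¹)))|
        ≤ D * Real.exp (-a*w^2) * (1+|w|)^3 := by
      rw [abs_neg, abs_mul, abs_of_pos (gauss_pos hε w)]
      calc gaussLDensity ε w * |(-(1 + Real.exp (w + z))⁻¹)|
          ≤ (D * Real.exp (-a*w^2)) * 1 :=
            mul_le_mul hcb hg1b (abs_nonneg _) (by positivity)
        _ ≤ D * Real.exp (-a*w^2) * (1+|w|)^3 := by
            apply mul_le_mul_of_nonneg_left (h03 w) (by positivity)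
    have hfin : (D*(B + ((1+3*ε/2)/ε)*B + 1)) * ((1+|w|)^3 * Real.exp (-a*w^2))
        = D * Real.exp (-a*w^2) * (B*(1+|w|)^3)
        + D * Real.exp (-a*w^2) * (((1+3*ε/2)/ε)*B*(1+|w|)^3)
        + D * Real.exp (-a*w^2) * (1+|w|)^3 := by ring
    rw [hfin]
    exact tri.trans (add_le_add (add_le_add b1 b2) b3)
  -- tendsto of H at ±∞
  have hten := tendsto_one_add_abs_pow_gauss_atTop ha 3
  have htenb := tendsto_one_add_abs_pow_gauss_atBot ha 3
  have htop : Tendsto (fun w : ℝ =>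
      -(gaussLDensity ε w * Real.log (1 + Real.exp (-w - z)))
      + (gaussLDensity ε w * (-(w - ε)/(2*ε))) * Real.log (1 + Real.exp (-w - z))
      - gaussLDensity ε w * (-(1 + Real.exp (w + z))⁻¹)) atTop (nhds 0) := by
    apply squeeze_zero_norm hHbound
    have := hten.const_mul (D*(B + ((1+3*ε/2)/ε)*B + 1))
    simpa using this
  have hbot : Tendsto (fun w : ℝ =>
      -(gaussLDensity ε w * Real.log (1 + Real.exp (-w - z)))
      + (gaussLDensity ε w * (-(w - ε)/(2*ε))) * Real.log (1 + Real.exp (-w - z))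
      - gaussLDensity ε w * (-(1 + Real.exp (w + z))⁻¹)) atBot (nhds 0) := by
    apply squeeze_zero_norm hHbound
    have := htenb.const_mul (D*(B + ((1+3*ε/2)/ε)*B + 1))
    simpa using this
  -- FTC on the whole line
  have hdiffInt : Integrable (fun w : ℝ =>
      gaussLDensity ε w * (-(1/(2*ε)) + (w-ε)/(2*ε) + (w-ε)^2/(4*ε^2)) *
        Real.log (1 + Real.exp (-w - z))
      - gaussLDensity ε w * (-(1 + Real.exp (w + z))⁻¹ +
        Real.exp (w + z)/(1 + Real.exp (w + z))^2)) := hF'int.sub hφ_int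
  have hzero := integral_of_hasDerivAt_of_tendsto hHderiv hdiffInt hbot htop
  rw [integral_sub hF'int hφ_int] at hzero
  have h1 : (∫ w : ℝ, gaussLDensity ε w * (-(1/(2*ε)) + (w-ε)/(2*ε) + (w-ε)^2/(4*ε^2)) *
        Real.log (1 + Real.exp (-w - z)))
      = ∫ w : ℝ, gaussLDensity ε w * (-(1 + Real.exp (w + z))⁻¹ +
        Real.exp (w + z)/(1 + Real.exp (w + z))^2) := by linarith
  have h3 : (∫ w : ℝ, gaussLDensity ε w * (-(1 + Real.exp (w + z))⁻¹ +
        Real.exp (w + z)/(1 + Real.exp (w + z))^2))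
      = -∫ w : ℝ, gaussLDensity ε w / (1 + Real.exp (w + z)) ^ 2 := by
    rw [← integral_neg]
    apply integral_congr_ae
    filter_upwards with w
    have hEne := (one_add_exp_pos (w + z)).ne'
    field_simp
    ring
  have hfinal : (∫ w : ℝ, gaussLDensity ε w * (-(1/(2*ε)) + (w-ε)/(2*ε) + (w-ε)^2/(4*ε^2)) *
        Real.log (1 + Real.exp (-w - z)))
      = -∫ w : ℝ, gaussLDensity ε w / (1 + Real.exp (w + z)) ^ 2 := h1.trans h3
  rw [← hfinal]
  exact hderiv
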